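/- arXiv:1311.4158 — 3 statements merged into one kernel-verified Lean document; each statement's English description precedes it below -/
import Mathlib

section
/- Let G be a finite group acting unitarily on a Hilbert space X, with normalized templates (‖gt^k‖ = 1 for all g, k). Let η_1,...,η_N : ℝ → ℝ be Lipschitz with constants L_n and L = max_n L_n satisfying N·L ≤ 1. Define for each k the map Σ^k(I) ∈ ℝ^N with components μ_n^k(I) = (1/|G|) Σ_{g∈G} η_n(⟨gI, t^k⟩). Then ‖Σ^k(I) − Σ^k(I')‖_{ℝ^N} ≤ N·L·‖I − I'‖ ≤ ‖I − I'‖ for all I, I' ∈ X. -/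
open scoped RealInnerProductSpace

/-- stability of the signature map: with normalized templates,
unitary finite group action, and nonlinearities `η n` Lipschitz with constants
`Ln n ≤ L`, `N·L ≤ 1`, the signature `Σ^k` is Lipschitz:
`‖Σ^k(I) − Σ^k(I')‖ ≤ N·L·‖I − I'‖ ≤ ‖I − I'‖`. -/
theorem signature_stability
    {G : Type*} [Group G] [Fintype G]
    {X : Type*} [NormedAddCommGroup X] [InnerProductSpace ℝ X]
    [MulAction G X]
    (hlin : ∀ (g : G) (x y : X), g • (x - y) = g • x - g • y)
    (hunitary : ∀ (g : G) (x y : X), ⟪g • x, g • y⟫ = ⟪x, y⟫)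
    (N : ℕ) (t : X) (hnorm : ∀ g : G, ‖g • t‖ = 1)
    (η : Fin N → ℝ → ℝ) (Ln : Fin N → NNReal) (L : NNReal)
    (hLip : ∀ n, LipschitzWith (Ln n) (η n))
    (hLe : ∀ n, Ln n ≤ L)
    (hNL : (N : ℝ) * L ≤ 1)
    (Sig : X → EuclideanSpace ℝ (Fin N))
    (hSig : ∀ (I : X) (n : Fin N),
      Sig I n = (1 / (Fintype.card G : ℝ)) * ∑ g : G, η n ⟪g • I, t⟫)
    (I I' : X) :
    ‖Sig I - Sig I'‖ ≤ (N : ℝ) * L * ‖I - I'‖ ∧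
      (N : ℝ) * L * ‖I - I'‖ ≤ ‖I - I'‖ := by
  have hL0 : (0:ℝ) ≤ L := L.coe_nonneg
  have hcard : (0:ℝ) < (Fintype.card G : ℝ) := by
    exact_mod_cast Fintype.card_pos
  -- norm preserved by action
  have hnormg : ∀ (g : G) (x : X), ‖g • x‖ = ‖x‖ := by
    intro g x
    have := hunitary g x x
    rw [real_inner_self_eq_norm_sq, real_inner_self_eq_norm_sq] at this
    nlinarith [norm_nonneg (g • x), norm_nonneg x]
  -- componentwise bound
  have hcomp : ∀ n : Fin N, |Sig I n - Sig I' n| ≤ (L : ℝ) * ‖I - I'‖ := by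
    intro n
    rw [hSig, hSig, ← mul_sub, ← Finset.sum_sub_distrib]
    have hterm : ∀ g : G, |η n ⟪g • I, t⟫ - η n ⟪g • I', t⟫| ≤ (L : ℝ) * ‖I - I'‖ := by
      intro g
      have h1 := (hLip n).dist_le_mul ⟪g • I, t⟫ ⟪g • I', t⟫
      rw [Real.dist_eq] at h1
      have h2 : |⟪g • I, t⟫ - ⟪g • I', t⟫| ≤ ‖I - I'‖ := by
        rw [← inner_sub_left, ← hlin]
        calc |⟪g • (I - I'), t⟫| ≤ ‖g • (I - I')‖ * ‖t‖ :=
              abs_real_inner_le_norm _ _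
          _ = ‖I - I'‖ * ‖t‖ := by rw [hnormg]
          _ ≤ ‖I - I'‖ * 1 := by
              have : ‖t‖ = 1 := by simpa using hnorm (1 : G)
              rw [this]
          _ = ‖I - I'‖ := mul_one _
      have hLn : (Ln n : ℝ) ≤ L := by exact_mod_cast hLe n
      calc |η n ⟪g • I, t⟫ - η n ⟪g • I', t⟫| ≤ (Ln n : ℝ) * |⟪g • I, t⟫ - ⟪g • I', t⟫| :=
            h1
        _ ≤ (L : ℝ) * ‖I - I'‖ := by
            apply mul_le_mul hLn h2 (abs_nonneg _) hL0
    calc |1 / (Fintype.card G : ℝ) * ∑ g : G, (η n ⟪g • I, t⟫ - η n ⟪g • I', t⟫)|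
        ≤ 1 / (Fintype.card G : ℝ) * ∑ g : G, |η n ⟪g • I, t⟫ - η n ⟪g • I', t⟫| := by
          rw [abs_mul, abs_of_pos (by positivity : (0:ℝ) < 1 / (Fintype.card G : ℝ))]
          exact mul_le_mul_of_nonneg_left (Finset.abs_sum_le_sum_abs _ _) (by positivity)
      _ ≤ 1 / (Fintype.card G : ℝ) * ∑ _g : G, (L : ℝ) * ‖I - I'‖ := by
          gcongr with g
          exact hterm g
      _ = (L : ℝ) * ‖I - I'‖ := by
          rw [Finset.sum_const, Finset.card_univ, nsmul_eq_mul]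
          field_simp
  constructor
  · have h1 : ‖Sig I - Sig I'‖ ≤ Real.sqrt ((N : ℝ) * ((L : ℝ) * ‖I - I'‖)^2) := by
      rw [EuclideanSpace.norm_eq]
      apply Real.sqrt_le_sqrt
      calc ∑ n : Fin N, ‖(Sig I - Sig I') n‖ ^ 2
          ≤ ∑ _n : Fin N, ((L : ℝ) * ‖I - I'‖) ^ 2 := by
            apply Finset.sum_le_sum
            intro n _
            have : ‖(Sig I - Sig I') n‖ = |Sig I n - Sig I' n| := by
              simp [Real.norm_eq_abs]
            rw [this]
            exact pow_le_pow_left₀ (abs_nonneg _) (hcomp n) 2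
        _ = (N : ℝ) * ((L : ℝ) * ‖I - I'‖) ^ 2 := by
            rw [Finset.sum_const, Finset.card_univ, nsmul_eq_mul, Fintype.card_fin]
    calc ‖Sig I - Sig I'‖ ≤ Real.sqrt ((N : ℝ) * ((L : ℝ) * ‖I - I'‖)^2) := h1
      _ = Real.sqrt (N : ℝ) * ((L : ℝ) * ‖I - I'‖) := by
          rw [Real.sqrt_mul (by positivity), Real.sqrt_sq (by positivity)]
      _ ≤ (N : ℝ) * ((L : ℝ) * ‖I - I'‖) := by
          apply mul_le_mul_of_nonneg_right _ (by positivity)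
          have : Real.sqrt (N:ℝ) ≤ Real.sqrt ((N:ℝ)^2) := by
            apply Real.sqrt_le_sqrt
            exact_mod_cast Nat.le_self_pow two_ne_zero N
          simpa [Real.sqrt_sq (Nat.cast_nonneg (α := ℝ) N)] using this
      _ = (N : ℝ) * L * ‖I - I'‖ := by ring
  · calc (N : ℝ) * L * ‖I - I'‖ ≤ 1 * ‖I - I'‖ :=
        mul_le_mul_of_nonneg_right hNL (norm_nonneg _)
      _ = ‖I - I'‖ := one_mul _
end

section
/- Under the hypotheses of the signature stability theorem (N·L_η ≤ 1, normalized templates, unitary finite group action), the signature distance is bounded by the Hausdorff-type distance between orbits: d(Σ(I), Σ(I')) ≤ min_{g,g'∈G} ‖gI − g'I'‖. -/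
open scoped RealInnerProductSpace

/-! Each coordinate `μ_n^k` of the signature is the orbit mean of the Lipschitz function
`x ↦ η_n ⟪x, t^k⟫`. Since `G` acts by isometries, averaging over the orbit preserves the Lipschitz
constant `L_n ‖t^k‖ ≤ L`, and passing from coordinates to the Euclidean norm costs a factor
`√N ≤ N`, so each `Σ^k` is `1`-Lipschitz when `N L ≤ 1`. Orbit means are `G`-invariant, so
`‖Σ^k(I) - Σ^k(I')‖ = ‖Σ^k(gI) - Σ^k(g'I')‖ ≤ ‖gI - g'I'‖` for every pair `g, g'`. -/

open Finset
open scoped BigOperators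

lemma EuclideanSpace.norm_le_sqrt_card_mul {𝕜 ι : Type*} [RCLike 𝕜] [Fintype ι]
    {x : EuclideanSpace 𝕜 ι} {c : ℝ} (h : ∀ i, ‖x i‖ ≤ c) :
    ‖x‖ ≤ √(Fintype.card ι) * c := by
  rcases isEmpty_or_nonempty ι with hι | ⟨⟨i₀⟩⟩
  · simp [Subsingleton.elim x 0]
  have hc : 0 ≤ c := (norm_nonneg _).trans (h i₀)
  calc ‖x‖ = √(∑ i, ‖x i‖ ^ 2) := EuclideanSpace.norm_eq x
    _ ≤ √(∑ _i : ι, c ^ 2) := by gcongr with i; exact h i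
    _ = √(Fintype.card ι) * c := by
      rw [sum_const, card_univ, nsmul_eq_mul, Real.sqrt_mul (Nat.cast_nonneg _),
        Real.sqrt_sq hc]

lemma one_div_card_mul_sum_le {ι : Type*} [Fintype ι] {a : ι → ℝ} {c : ℝ} (hc : 0 ≤ c)
    (h : ∀ i, a i ≤ c) : 1 / (Fintype.card ι : ℝ) * ∑ i, a i ≤ c := by
  rcases isEmpty_or_nonempty ι with hι | hι
  · simpa using hc
  rw [one_div_mul_eq_div, ← Fintype.expect_eq_sum_div_card]
  exact expect_le univ_nonempty fun i _ => h i

lemma Real.sqrt_natCast_le_self (n : ℕ) : √(n : ℝ) ≤ n := by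
  refine Real.sqrt_le_self_iff.mpr ?_
  rcases Nat.eq_zero_or_pos n with h | h
  · exact Or.inl (by simp [h])
  · exact Or.inr (by exact_mod_cast h)

section OrbitMean

variable (G : Type*) {X : Type*} [Group G] [Fintype G] [MulAction G X]

noncomputable def orbitMean (f : X → ℝ) (x : X) : ℝ := 𝔼 g : G, f (g • x)

variable {G}

theorem orbitMean_smul (f : X → ℝ) (g : G) (x : X) : orbitMean G f (g • x) = orbitMean G f x :=
  Fintype.expect_equiv (Equiv.mulRight g) _ _ fun h => by simp [mul_smul]

theorem lipschitzWith_orbitMean [PseudoMetricSpace X] {K : NNReal} {f : X → ℝ}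
    (hG : ∀ g : G, Isometry ((g • ·) : X → X)) (hf : LipschitzWith K f) :
    LipschitzWith K (orbitMean G f) := by
  refine LipschitzWith.of_dist_le_mul fun x y => ?_
  calc dist (orbitMean G f x) (orbitMean G f y) = |𝔼 g : G, (f (g • x) - f (g • y))| := by
        rw [Real.dist_eq, orbitMean, orbitMean, expect_sub_distrib]
    _ ≤ 𝔼 g : G, |f (g • x) - f (g • y)| := abs_expect_le _ _
    _ ≤ 𝔼 _g : G, K * dist x y := expect_le_expect fun g _ => by
        rw [← Real.dist_eq, ← (hG g).dist_eq x y]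
        exact hf.dist_le_mul _ _
    _ = K * dist x y := Fintype.expect_const _

end OrbitMean

theorem isometry_smul_of_inner_smul {G X : Type*} [NormedAddCommGroup X]
    [InnerProductSpace ℝ X] [SMul G X]
    (hlin : ∀ (g : G) (x y : X), g • (x - y) = g • x - g • y)
    (hunitary : ∀ (g : G) (x y : X), ⟪g • x, g • y⟫ = ⟪x, y⟫) (g : G) :
    Isometry ((g • ·) : X → X) :=
  Isometry.of_dist_eq fun x y => by
    rw [dist_eq_norm, dist_eq_norm, ← hlin, norm_eq_sqrt_real_inner, hunitary,
      ← norm_eq_sqrt_real_inner]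

theorem LipschitzWith.comp_inner_left {X : Type*} [NormedAddCommGroup X]
    [InnerProductSpace ℝ X] {K : NNReal} {φ : ℝ → ℝ} (hφ : LipschitzWith K φ) (t : X) :
    LipschitzWith (K * ‖t‖₊) (fun x : X => φ ⟪x, t⟫) := by
  have ht : LipschitzWith ‖t‖₊ (fun x : X => ⟪x, t⟫) :=
    LipschitzWith.of_dist_le_mul fun x y => by
      rw [Real.dist_eq, ← inner_sub_left, dist_eq_norm, coe_nnnorm, mul_comm]
      exact abs_real_inner_le_norm _ _
  exact hφ.comp ht

/-- the signature distance is bounded by the Hausdorff-type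
distance between orbits: `d(Σ(I), Σ(I')) ≤ min_{g,g'∈G} ‖gI − g'I'‖`. -/
theorem signature_stability_hausdorff
    {G : Type*} [Group G] [Fintype G]
    {X : Type*} [NormedAddCommGroup X] [InnerProductSpace ℝ X]
    [MulAction G X]
    (hlin : ∀ (g : G) (x y : X), g • (x - y) = g • x - g • y)
    (hunitary : ∀ (g : G) (x y : X), ⟪g • x, g • y⟫ = ⟪x, y⟫)
    (N K : ℕ) (t : Fin K → X) (hnorm : ∀ (g : G) (k : Fin K), ‖g • t k‖ = 1)
    (η : Fin N → ℝ → ℝ) (Ln : Fin N → NNReal) (L : NNReal)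
    (hLip : ∀ n, LipschitzWith (Ln n) (η n))
    (hLe : ∀ n, Ln n ≤ L)
    (hNL : (N : ℝ) * L ≤ 1)
    (Sig : Fin K → X → EuclideanSpace ℝ (Fin N))
    (hSig : ∀ (k : Fin K) (I : X) (n : Fin N),
      Sig k I n = (1 / (Fintype.card G : ℝ)) * ∑ g : G, η n ⟪g • I, t k⟫)
    (I I' : X) :
    (1 / (K : ℝ)) * ∑ k : Fin K, ‖Sig k I - Sig k I'‖ ≤
      Finset.univ.inf' Finset.univ_nonempty
        (fun p : G × G => ‖p.1 • I - p.2 • I'‖) := by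
  have hSig_mean (k : Fin K) (J : X) (n : Fin N) :
      Sig k J n = orbitMean G (fun x => η n ⟪x, t k⟫) J := by
    rw [hSig, orbitMean, Fintype.expect_eq_sum_div_card, one_div_mul_eq_div]
  have hSig_smul (k : Fin K) (g : G) (J : X) : Sig k (g • J) = Sig k J := by
    ext n
    rw [hSig_mean, hSig_mean, orbitMean_smul]
  have htk (k : Fin K) : ‖t k‖₊ = 1 := by
    simpa only [one_smul, ← coe_nnnorm, NNReal.coe_eq_one] using hnorm 1 k
  have hSig_dist (k : Fin K) (J J' : X) : ‖Sig k J - Sig k J'‖ ≤ ‖J - J'‖ := by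
    have hcoord (n : Fin N) : ‖(Sig k J - Sig k J') n‖ ≤ L * ‖J - J'‖ := by
      have hμ := lipschitzWith_orbitMean (isometry_smul_of_inner_smul hlin hunitary)
        ((hLip n).comp_inner_left (t k))
      rw [PiLp.sub_apply, ← dist_eq_norm, hSig_mean, hSig_mean, ← dist_eq_norm]
      calc _ ≤ (Ln n * ‖t k‖₊ : NNReal) * dist J J' := hμ.dist_le_mul J J'
        _ ≤ L * dist J J' := by rw [htk, mul_one]; gcongr; exact hLe n
    calc ‖Sig k J - Sig k J'‖ ≤ √(N : ℝ) * (L * ‖J - J'‖) := by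
          simpa using EuclideanSpace.norm_le_sqrt_card_mul hcoord
      _ ≤ N * L * ‖J - J'‖ := by rw [← mul_assoc]; gcongr; exact Real.sqrt_natCast_le_self N
      _ ≤ ‖J - J'‖ := mul_le_of_le_one_left (norm_nonneg _) hNL
  refine le_inf' _ _ fun p _ => ?_
  have hbound := one_div_card_mul_sum_le (norm_nonneg (p.1 • I - p.2 • I')) fun k => by
    simpa only [hSig_smul] using hSig_dist k (p.1 • I) (p.2 • I')
  rwa [Fintype.card_fin] at hbound
end

section
/- Approximate invariance for linearized smooth transformations: let T_r be a family of transformations with r ∈ ℝ, and suppose on the pooling interval P the action satisfies T_r I = L_r^I I exactly with L_{r}^I L_{r̄}^I = L_{r+r̄}^I (local one-parameter group property), and that ⟨T_r I, t⟩ = 0 for all r ∈ ℝ \ (T_{r̄}P ∩ P). Then μ(T_{r̄} I) = μ(I), where μ(I) = ∫_P η(⟨T_r I, t⟩) dr for positive η with η(0) = 0. -/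
open MeasureTheory
open scoped RealInnerProductSpace

/-- approximate invariance for linearized smooth transformations:
if on the pooling interval the family acts additively in the parameter
(`T_r ∘ T_r̄ = T_{r+r̄}` on `I`) and `⟪T_r I, t⟫ = 0` outside
`T_{r̄}P ∩ P`, then the pooled signature is invariant:
`μ(T_{r̄} I) = μ(I)` with `μ(I) = ∫_P η(⟪T_r I, t⟫) dr`. -/
theorem approximate_invariance_linearized
    {X : Type*} [NormedAddCommGroup X] [InnerProductSpace ℝ X]
    (T : ℝ → X → X) (I t : X) (P : Set ℝ) (hP : MeasurableSet P)
    (η : ℝ → ℝ) (hηpos : ∀ x, 0 ≤ η x) (hη0 : η 0 = 0)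
    (rbar : ℝ)
    (hgroup : ∀ r : ℝ, T r (T rbar I) = T (r + rbar) I)
    (hloc : ∀ r : ℝ, r ∉ ((fun u => u + rbar) '' P ∩ P) → ⟪T r I, t⟫ = 0) :
    ∫ r in P, η ⟪T r (T rbar I), t⟫ = ∫ r in P, η ⟪T r I, t⟫ := by
  classical
  set f : ℝ → ℝ := fun r => η ⟪T r I, t⟫ with hf
  set Q : Set ℝ := (fun u => u + rbar) '' P with hQ
  have key : ∀ r, r ∉ Q ∩ P → f r = 0 := fun r hr => by
    simp only [hf, hloc r hr, hη0]
  have h1 : ∀ r, η ⟪T r (T rbar I), t⟫ = f (r + rbar) := fun r => by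
    simp only [hf, hgroup r]
  simp_rw [h1]
  rw [← integral_indicator hP, ← integral_indicator hP]
  have h2 : P.indicator (fun r => f (r + rbar)) =
      fun r => Q.indicator f (r + rbar) := by
    funext r
    by_cases h : r ∈ P
    · rw [Set.indicator_of_mem h, Set.indicator_of_mem (show r + rbar ∈ Q from ⟨r, h, rfl⟩)]
    · rw [Set.indicator_of_notMem h, Set.indicator_of_notMem]
      rintro ⟨u, hu, huv⟩
      exact h (by rwa [add_right_cancel huv] at hu)
  rw [h2, integral_add_right_eq_self (Q.indicator f) rbar]
  congr 1
  funext r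
  by_cases h : r ∈ Q ∩ P
  · rw [Set.indicator_of_mem h.1, Set.indicator_of_mem h.2]
  · have h0 := key r h
    rw [Set.indicator_apply, Set.indicator_apply]
    simp only [hf] at h0
    split <;> split <;> first | exact h0 | exact h0.symm | rfl
end
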